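/- arXiv:2210.16717 — 2 statements merged into one kernel-verified Lean document; each statement's English description precedes it below -/
import Mathlib

section
/- For every integer k ≥ 100 and any two distinct roots α, β of the k-generalized Fibonacci polynomial f_k in ℂ, one has |α − β| > 1/(k^(3/2) · 3^(k/2)). -/
/-!
Multiplying by `z - 1` shows that every root of `f_k` satisfies `z ^ k * (2 - z) = 1`. For two
distinct roots `α, β` this relation gives `(α ^ k - β ^ k) / (α - β) = α ^ k * β ^ k`. Both roots
have modulus `< 2`, so this identity forbids both from having modulus `> 1.9`. A root of
modulus `≤ 1.9` has `|z| ^ k ≤ 10`, hence `|z| ≤ 1.1`. If the other root has modulus `> 1.9`, the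
two are far apart. Otherwise, letting `β → α` in the identity gives `k α ^ (k - 1) = α ^ (2k)`,
which fails by a margin of order `k`, whereas both sides of the identity are `O(k²)`-Lipschitz
in `β`. Hence `|α - β| ≫ 1 / k`, which is much stronger than the claimed bound.
-/

open Polynomial Real

noncomputable def fibPoly (k : ℕ) : Polynomial ℂ :=
  X ^ k - ∑ i ∈ Finset.range k, X ^ i

open Finset

section NormedRing

variable {R : Type*} [NormedCommRing R] [NormOneClass R] {x y : R} {M : ℝ}

lemma norm_geom_sum₂_le (hx : ‖x‖ ≤ M) (hy : ‖y‖ ≤ M) (n : ℕ) :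
    ‖∑ i ∈ range n, x ^ i * y ^ (n - 1 - i)‖ ≤ n * M ^ (n - 1) := by
  have hM : 0 ≤ M := (norm_nonneg x).trans hx
  calc ‖∑ i ∈ range n, x ^ i * y ^ (n - 1 - i)‖
      ≤ ∑ i ∈ range n, ‖x ^ i * y ^ (n - 1 - i)‖ := norm_sum_le _ _
    _ ≤ ∑ _i ∈ range n, M ^ (n - 1) := by
        refine sum_le_sum fun i hi => ?_
        have hin : i + (n - 1 - i) = n - 1 := by have := mem_range.mp hi; omega
        calc ‖x ^ i * y ^ (n - 1 - i)‖ ≤ ‖x‖ ^ i * ‖y‖ ^ (n - 1 - i) :=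
              (norm_mul_le _ _).trans (mul_le_mul (norm_pow_le _ _) (norm_pow_le _ _)
                (norm_nonneg _) (by positivity))
          _ ≤ M ^ i * M ^ (n - 1 - i) := by gcongr
          _ = M ^ (n - 1) := by rw [← pow_add, hin]
    _ = n * M ^ (n - 1) := by rw [sum_const, card_range, nsmul_eq_mul]

lemma norm_pow_sub_pow_le (hx : ‖x‖ ≤ M) (hy : ‖y‖ ≤ M) (n : ℕ) :
    ‖x ^ n - y ^ n‖ ≤ n * M ^ (n - 1) * ‖x - y‖ := by
  rw [← geom_sum₂_mul]
  exact (norm_mul_le _ _).trans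
    (mul_le_mul_of_nonneg_right (norm_geom_sum₂_le hx hy n) (norm_nonneg _))

lemma norm_geom_sum₂_sub_le (hM : 1 ≤ M) (hx : ‖x‖ ≤ M) (hy : ‖y‖ ≤ M) (n : ℕ) :
    ‖∑ i ∈ range n, x ^ i * y ^ (n - 1 - i) - n * y ^ (n - 1)‖ ≤ n ^ 2 * M ^ n * ‖x - y‖ := by
  have hdiag : (n : R) * y ^ (n - 1) = ∑ i ∈ range n, y ^ i * y ^ (n - 1 - i) := by
    rw [sum_congr rfl fun i hi => ?_, sum_const, card_range, nsmul_eq_mul]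
    rw [← pow_add]; congr 1; have := mem_range.mp hi; omega
  rw [hdiag, ← sum_sub_distrib]
  calc ‖∑ i ∈ range n, (x ^ i * y ^ (n - 1 - i) - y ^ i * y ^ (n - 1 - i))‖
      ≤ ∑ i ∈ range n, ‖(x ^ i - y ^ i) * y ^ (n - 1 - i)‖ := by
        simp_rw [← sub_mul]; exact norm_sum_le _ _
    _ ≤ ∑ _i ∈ range n, n * M ^ n * ‖x - y‖ := by
        refine sum_le_sum fun i hi => ?_
        have hin : i < n := mem_range.mp hi
        calc ‖(x ^ i - y ^ i) * y ^ (n - 1 - i)‖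
            ≤ (i * M ^ (i - 1) * ‖x - y‖) * M ^ (n - 1 - i) :=
              (norm_mul_le _ _).trans (mul_le_mul (norm_pow_sub_pow_le hx hy i)
                ((norm_pow_le _ _).trans (pow_le_pow_left₀ (norm_nonneg y) hy _))
                (norm_nonneg _) (by positivity))
          _ = i * (M ^ (i - 1) * M ^ (n - 1 - i)) * ‖x - y‖ := by ring
          _ ≤ n * M ^ n * ‖x - y‖ := by
              rw [← pow_add]
              gcongr
              omega
    _ = n ^ 2 * M ^ n * ‖x - y‖ := by rw [sum_const, card_range, nsmul_eq_mul]; ring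

end NormedRing

lemma le_eleven_div_ten_of_pow_le_ten {r : ℝ} {k : ℕ} (hk : 100 ≤ k)
    (h : r ^ k ≤ 10) : r ≤ 11 / 10 := by
  by_contra! hlt
  have : (11 / 10 : ℝ) ^ 100 ≤ r ^ k :=
    calc (11 / 10 : ℝ) ^ 100 ≤ (11 / 10) ^ k := pow_le_pow_right₀ (by norm_num) hk
      _ ≤ r ^ k := pow_le_pow_left₀ (by norm_num) hlt.le k
  norm_num at this
  linarith

lemma natCast_mul_two_pow_lt (k : ℕ) : (k : ℝ) * 2 ^ (k - 1) < (361 / 100) ^ k := by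
  rcases k with _ | k
  · norm_num
  have hbern := one_add_mul_le_pow (a := (4 / 5 : ℝ)) (by norm_num) (k + 1)
  have h2 : (0 : ℝ) < 2 ^ k := by positivity
  calc ((k + 1 : ℕ) : ℝ) * 2 ^ (k + 1 - 1)
      < (5 / 4 * (1 + (k + 1 : ℕ) * (4 / 5))) * 2 ^ k := by
        rw [Nat.add_sub_cancel]; gcongr; push_cast; linarith
    _ ≤ (5 / 4 * (1 + 4 / 5) ^ (k + 1)) * 2 ^ k := by gcongr
    _ = 5 / 8 * (18 / 5) ^ (k + 1) := by
        rw [show (18 / 5 : ℝ) = (1 + 4 / 5) * 2 by norm_num, mul_pow, pow_succ 2 k]; ring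
    _ ≤ (361 / 100) ^ (k + 1) := by
        have : (18 / 5 : ℝ) ^ (k + 1) ≤ (361 / 100) ^ (k + 1) :=
          pow_le_pow_left₀ (by norm_num) (by norm_num) _
        linarith [pow_pos (by norm_num : (0 : ℝ) < 18 / 5) (k + 1)]

lemma mul_le_rpow_three_halves_mul_three_rpow {x : ℝ} (hx : 10 ≤ x) :
    100 * x ≤ x ^ ((3 : ℝ) / 2) * 3 ^ (x / 2) := by
  have hx_le : x ≤ x ^ ((3 : ℝ) / 2) := by
    conv_lhs => rw [← rpow_one x]
    exact rpow_le_rpow_of_exponent_le (by linarith) (by norm_num)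
  have h3 : (100 : ℝ) ≤ 3 ^ (x / 2) :=
    calc (100 : ℝ) ≤ 3 ^ (5 : ℝ) := by norm_num
      _ ≤ 3 ^ (x / 2) := rpow_le_rpow_of_exponent_le (by norm_num) (by linarith)
  nlinarith

section Relation

lemma geom_sum₂_eq_pow_mul_pow {K : Type*} [Field K] {k : ℕ} {α β : K}
    (hα : α ^ k * (2 - α) = 1) (hβ : β ^ k * (2 - β) = 1) (hne : α ≠ β) :
    ∑ i ∈ range k, α ^ i * β ^ (k - 1 - i) = α ^ k * β ^ k := by
  have hsub : α - β ≠ 0 := sub_ne_zero.mpr hne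
  apply mul_right_cancel₀ hsub
  rw [geom_sum₂_mul]
  linear_combination β ^ k * hα - α ^ k * hβ

variable {k : ℕ} {z : ℂ}

lemma norm_pow_le_ten (h : z ^ k * (2 - z) = 1) (hz : ‖z‖ ≤ 19 / 10) : ‖z‖ ^ k ≤ 10 := by
  have hnorm : ‖z‖ ^ k * ‖2 - z‖ = 1 := by simpa [norm_pow] using congrArg norm h
  have h2z : 1 / 10 ≤ ‖2 - z‖ := by
    have := norm_sub_norm_le (2 : ℂ) z
    rw [Complex.norm_two] at this
    linarith
  nlinarith [pow_nonneg (norm_nonneg z) k]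

lemma one_div_four_le_norm_pow (h : z ^ k * (2 - z) = 1) (hz : ‖z‖ ≤ 11 / 10) :
    1 / 4 ≤ ‖z‖ ^ k := by
  have hnorm : ‖z‖ ^ k * ‖2 - z‖ = 1 := by simpa [norm_pow] using congrArg norm h
  have h2z : ‖2 - z‖ ≤ 31 / 10 := by
    have := norm_sub_le (2 : ℂ) z
    rw [Complex.norm_two] at this
    linarith
  nlinarith [pow_nonneg (norm_nonneg z) k]

end Relation

section Roots

variable {k : ℕ} {z : ℂ}

lemma pow_mul_two_sub_eq_one_of_isRoot (h : (fibPoly k).IsRoot z) : z ^ k * (2 - z) = 1 := by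
  have hz : z ^ k - ∑ i ∈ range k, z ^ i = 0 := by simpa [fibPoly] using h
  linear_combination (1 - z) * hz - geom_sum_mul z k

lemma norm_lt_two_of_isRoot (h : (fibPoly k).IsRoot z) : ‖z‖ < 2 := by
  have hz : z ^ k = ∑ i ∈ range k, z ^ i := by
    simpa [fibPoly, sub_eq_zero] using h
  by_contra! h2
  have hsum : ‖z‖ ^ k ≤ ∑ i ∈ range k, ‖z‖ ^ i :=
    calc ‖z‖ ^ k = ‖∑ i ∈ range k, z ^ i‖ := by rw [← hz, norm_pow]
      _ ≤ ∑ i ∈ range k, ‖z‖ ^ i := (norm_sum_le _ _).trans_eq (by simp only [norm_pow])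
  have hgeom := geom_sum_mul ‖z‖ k
  have hS : 0 ≤ ∑ i ∈ range k, ‖z‖ ^ i := sum_nonneg fun i _ => by positivity
  nlinarith [mul_nonneg hS (by linarith : (0 : ℝ) ≤ ‖z‖ - 2)]

end Roots

section Separation

variable {k : ℕ} {α β : ℂ}

lemma norm_le_nineteen_div_ten_or_norm_le (hα : α ^ k * (2 - α) = 1)
    (hβ : β ^ k * (2 - β) = 1) (hne : α ≠ β) (hα2 : ‖α‖ < 2) (hβ2 : ‖β‖ < 2) :
    ‖α‖ ≤ 19 / 10 ∨ ‖β‖ ≤ 19 / 10 := by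
  by_contra! hlarge
  have hupper := norm_geom_sum₂_le hα2.le hβ2.le k
  rw [geom_sum₂_eq_pow_mul_pow hα hβ hne, norm_mul, norm_pow, norm_pow] at hupper
  have hlower : (361 / 100 : ℝ) ^ k ≤ ‖α‖ ^ k * ‖β‖ ^ k := by
    rw [show (361 / 100 : ℝ) = 19 / 10 * (19 / 10) by norm_num, mul_pow]
    gcongr
    exacts [hlarge.1.le, hlarge.2.le]
  linarith [natCast_mul_two_pow_lt k]

lemma natCast_div_five_le_norm_natCast_mul_pow_sub (hk : 100 ≤ k) (hα : ‖α‖ ≤ 11 / 10)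
    (hlow : 1 / 4 ≤ ‖α‖ ^ k) (hup : ‖α‖ ^ k ≤ 10) :
    (k : ℝ) / 5 ≤ ‖(k : ℂ) * α ^ (k - 1) - α ^ k * α ^ k‖ := by
  obtain ⟨m, rfl⟩ : ∃ m, k = m + 1 := ⟨k - 1, by omega⟩
  set D := ((m + 1 : ℕ) : ℂ) * α ^ (m + 1 - 1) - α ^ (m + 1) * α ^ (m + 1)
  have hfac : α * D = α ^ (m + 1) * ((m + 1 : ℕ) - α ^ (m + 2)) := by
    simp only [D, Nat.add_sub_cancel]; ring
  have hnorm : ‖α‖ * ‖D‖ = ‖α‖ ^ (m + 1) * ‖((m + 1 : ℕ) : ℂ) - α ^ (m + 2)‖ := by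
    rw [← norm_mul, hfac, norm_mul, norm_pow]
  have hpow : ‖α‖ ^ (m + 2) ≤ 11 := by
    rw [pow_succ]
    nlinarith [norm_nonneg α]
  have hfar : ((m + 1 : ℕ) : ℝ) - 11 ≤ ‖((m + 1 : ℕ) : ℂ) - α ^ (m + 2)‖ := by
    have := norm_sub_norm_le ((m + 1 : ℕ) : ℂ) (α ^ (m + 2))
    rw [Complex.norm_natCast, norm_pow] at this
    linarith
  have hk' : (100 : ℝ) ≤ ((m + 1 : ℕ) : ℝ) := by exact_mod_cast hk
  have hαD : ((m + 1 : ℕ) : ℝ) / 5 * (11 / 10) ≤ ‖α‖ * ‖D‖ := by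
    rw [hnorm]; nlinarith
  nlinarith [norm_nonneg D, norm_nonneg α]

lemma norm_natCast_mul_pow_sub_le {M : ℝ} (hk : 100 ≤ k) (hα : α ^ k * (2 - α) = 1)
    (hβ : β ^ k * (2 - β) = 1) (hne : α ≠ β) (hM : 1 ≤ M) (hαM : ‖α‖ ≤ M) (hβM : ‖β‖ ≤ M)
    (hMk : M ^ k ≤ 10) :
    ‖(k : ℂ) * α ^ (k - 1) - α ^ k * α ^ k‖ ≤ 11 * k ^ 2 * ‖α - β‖ := by
  have hsplit : (k : ℂ) * α ^ (k - 1) - α ^ k * α ^ k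
      = -(∑ i ∈ range k, β ^ i * α ^ (k - 1 - i) - k * α ^ (k - 1))
        + α ^ k * (β ^ k - α ^ k) := by
    rw [geom_sum₂_eq_pow_mul_pow hβ hα hne.symm]; ring
  have hsum := norm_geom_sum₂_sub_le hM hβM hαM k
  have hpow := norm_pow_sub_pow_le hβM hαM k
  have hαk : ‖α ^ k‖ ≤ 10 := by
    rw [norm_pow]; exact (pow_le_pow_left₀ (norm_nonneg α) hαM k).trans hMk
  have hMk' : M ^ (k - 1) ≤ 10 := (pow_le_pow_right₀ hM (Nat.sub_le k 1)).trans hMk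
  rw [norm_sub_rev β α] at hsum hpow
  have hk' : (100 : ℝ) ≤ k := by exact_mod_cast hk
  calc ‖(k : ℂ) * α ^ (k - 1) - α ^ k * α ^ k‖
      ≤ ‖∑ i ∈ range k, β ^ i * α ^ (k - 1 - i) - k * α ^ (k - 1)‖
        + ‖α ^ k‖ * ‖β ^ k - α ^ k‖ := by
        rw [hsplit, ← norm_neg (∑ i ∈ range k, _ - _), ← norm_mul]; exact norm_add_le _ _
    _ ≤ k ^ 2 * 10 * ‖α - β‖ + 10 * (k * 10 * ‖α - β‖) := by
        gcongr
        · exact hsum.trans (by gcongr)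
        · exact hpow.trans (by gcongr)
    _ ≤ 11 * k ^ 2 * ‖α - β‖ := by
        nlinarith [mul_nonneg (mul_nonneg (Nat.cast_nonneg k) (sub_nonneg.mpr hk'))
          (norm_nonneg (α - β))]

lemma one_div_lt_norm_sub_of_norm_le (hk : 100 ≤ k) (hα : α ^ k * (2 - α) = 1)
    (hβ : β ^ k * (2 - β) = 1) (hne : α ≠ β) (hα19 : ‖α‖ ≤ 19 / 10) :
    1 / (100 * k) < ‖α - β‖ := by
  have hαk := norm_pow_le_ten hα hα19
  have hα11 := le_eleven_div_ten_of_pow_le_ten hk hαk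
  have hk' : (100 : ℝ) ≤ k := by exact_mod_cast hk
  rw [div_lt_iff₀ (by positivity)]
  by_cases hβ19 : ‖β‖ ≤ 19 / 10
  · have hβk := norm_pow_le_ten hβ hβ19
    have hMk : max 1 (max ‖α‖ ‖β‖) ^ k ≤ 10 := by
      rcases max_choice 1 (max ‖α‖ ‖β‖) with h | h <;> rw [h]
      · norm_num
      · rcases max_choice ‖α‖ ‖β‖ with h' | h' <;> rwa [h']
    have hlow := natCast_div_five_le_norm_natCast_mul_pow_sub hk hα11
      (one_div_four_le_norm_pow hα hα11) hαk
    have hup := norm_natCast_mul_pow_sub_le hk hα hβ hne (le_max_left _ _)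
      ((le_max_left _ _).trans (le_max_right _ _)) ((le_max_right _ _).trans (le_max_right _ _))
      hMk
    nlinarith
  · have hdist := norm_sub_norm_le β α
    rw [norm_sub_rev] at hdist
    nlinarith

lemma one_div_lt_norm_sub_of_isRoot (hk : 100 ≤ k) (hα : (fibPoly k).IsRoot α)
    (hβ : (fibPoly k).IsRoot β) (hne : α ≠ β) : 1 / (100 * k) < ‖α - β‖ := by
  have hα' := pow_mul_two_sub_eq_one_of_isRoot hα
  have hβ' := pow_mul_two_sub_eq_one_of_isRoot hβ
  rcases norm_le_nineteen_div_ten_or_norm_le hα' hβ' hne (norm_lt_two_of_isRoot hα)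
    (norm_lt_two_of_isRoot hβ) with h | h
  · exact one_div_lt_norm_sub_of_norm_le hk hα' hβ' hne h
  · rw [norm_sub_rev]
    exact one_div_lt_norm_sub_of_norm_le hk hβ' hα' hne.symm h

end Separation

/-- For every integer `k ≥ 100` and any two distinct roots `α, β` of `f_k` in `ℂ`,
one has `|α − β| > 1/(k^(3/2) · 3^(k/2))`. -/
theorem fibPoly_root_separation_weak (k : ℕ) (hk : 100 ≤ k) (α β : ℂ)
    (hα : (fibPoly k).IsRoot α) (hβ : (fibPoly k).IsRoot β) (hne : α ≠ β) :
    ‖α - β‖ > 1 / ((k : ℝ) ^ ((3 : ℝ) / 2) * (3 : ℝ) ^ ((k : ℝ) / 2)) := by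
  have hk' : (10 : ℝ) ≤ k := by exact_mod_cast (show 10 ≤ k by omega)
  calc 1 / ((k : ℝ) ^ ((3 : ℝ) / 2) * (3 : ℝ) ^ ((k : ℝ) / 2))
      ≤ 1 / (100 * k) :=
        one_div_le_one_div_of_le (by positivity) (mul_le_rpow_three_halves_mul_three_rpow hk')
    _ < ‖α - β‖ := one_div_lt_norm_sub_of_isRoot hk hα hβ hne
end

section
/- Let k ≥ 100 be an integer and let α = ρ_i·e^(iθ_i) and β = ρ_j·e^(iθ_j) be two roots of the k-generalized Fibonacci polynomial f_k with ρ_i, ρ_j < 1 and θ_i, θ_j ∈ (0, π]. If π/2 > |θ_i − θ_j| ≥ 2π/k, then |α − β| ≥ (4 − 2·log 3)/k. -/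
/-
A root `β` of `f_k` satisfies `β^k (β - 2) = -1`, obtained by multiplying `f_k` by `X - 1`.
Inside the unit disk `|β - 2| < 3`, so `|β|^k > 1/3`, and for `k ≥ 2` this forces `|β| > 1/2`.
Rotating `α - β` by `e^(-iθᵢ)` makes the `α`-term real, so `|α - β|` is at least the modulus
`ρⱼ |sin(θᵢ - θⱼ)|` of the imaginary part. Jordan's inequality turns `|θᵢ - θⱼ| ∈ [2π/k, π/2]`
into `|sin(θᵢ - θⱼ)| ≥ 4/k`. Hence `|α - β| ≥ 2/k`, which beats `(4 - 2 log 3)/k` because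
`log 3 > 1`.
-/

open Polynomial Real

theorem X_sub_one_mul_fibPoly (k : ℕ) :
    (X - 1) * fibPoly k = X ^ (k + 1) - 2 * X ^ k + 1 := by
  rw [fibPoly, mul_sub, mul_geom_sum]
  ring

theorem pow_mul_sub_two_of_fibPoly_isRoot {k : ℕ} {β : ℂ} (hβ : (fibPoly k).IsRoot β) :
    β ^ k * (β - 2) = -1 := by
  have h := congrArg (eval β) (X_sub_one_mul_fibPoly k)
  simp only [eval_mul, hβ.eq_zero, mul_zero, eval_add, eval_sub, eval_pow, eval_X,
    eval_ofNat, eval_one] at h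
  linear_combination -h

theorem one_third_lt_norm_pow_of_fibPoly_isRoot {k : ℕ} {β : ℂ} (hβ : (fibPoly k).IsRoot β)
    (hβ1 : ‖β‖ < 1) : 1 / 3 < ‖β‖ ^ k := by
  have hnorm : ‖β‖ ^ k * ‖β - 2‖ = 1 := by
    simpa using congrArg norm (pow_mul_sub_two_of_fibPoly_isRoot hβ)
  have hsub : ‖β - 2‖ < 3 := by
    calc ‖β - 2‖ ≤ ‖β‖ + ‖(2 : ℂ)‖ := norm_sub_le β 2
      _ < 3 := by norm_num; linarith
  nlinarith [pow_nonneg (norm_nonneg β) k, norm_nonneg (β - 2)]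

theorem abs_mul_sin_sub_le_norm_sub (r s θ φ : ℝ) :
    |s * sin (θ - φ)| ≤
      ‖(r : ℂ) * Complex.exp (θ * Complex.I) - s * Complex.exp (φ * Complex.I)‖ := by
  set z := (r : ℂ) * Complex.exp (θ * Complex.I) - s * Complex.exp (φ * Complex.I)
  have hrot : Complex.exp (-θ * Complex.I) * z
      = r - s * Complex.exp (↑(φ - θ) * Complex.I) := by
    simp only [z, mul_sub, ← mul_assoc, mul_comm _ (r : ℂ), mul_comm _ (s : ℂ)]
    rw [mul_assoc (r : ℂ), mul_assoc (s : ℂ), ← Complex.exp_add, ← Complex.exp_add]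
    push_cast
    ring_nf
    simp
  have him : (Complex.exp (-θ * Complex.I) * z).im = s * sin (θ - φ) := by
    rw [hrot, Complex.sub_im, Complex.ofReal_im, Complex.im_ofReal_mul,
      Complex.exp_ofReal_mul_I_im, ← neg_sub θ φ, sin_neg]
    ring
  calc |s * sin (θ - φ)| = |(Complex.exp (-θ * Complex.I) * z).im| := by rw [him]
    _ ≤ ‖Complex.exp (-θ * Complex.I) * z‖ := Complex.abs_im_le_norm _
    _ = ‖z‖ := by rw [norm_mul, Complex.norm_exp]; simp

theorem four_div_le_sin (n : ℕ) {x : ℝ} (hlo : 2 * π / n ≤ x) (hhi : x ≤ π / 2) :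
    4 / n ≤ sin x :=
  calc (4 : ℝ) / n = 2 / π * (2 * π / n) := by field_simp; ring
    _ ≤ 2 / π * x := by gcongr
    _ ≤ sin x := mul_le_sin ((by positivity : 0 ≤ 2 * π / n).trans hlo) hhi

theorem fibPoly_nonconsecutive_arguments_separation_general (k : ℕ) (hk : 100 ≤ k)
    (α β : ℂ) (ρi ρj θi θj : ℝ)
    (hβ : (fibPoly k).IsRoot β)
    (hαpolar : α = (ρi : ℂ) * Complex.exp (θi * Complex.I))
    (hβpolar : β = (ρj : ℂ) * Complex.exp (θj * Complex.I))
    (hρj : 0 < ρj) (hρj1 : ρj < 1)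
    (hlt : |θi - θj| < π / 2) (hge : |θi - θj| ≥ 2 * π / k) :
    ‖α - β‖ ≥ (4 - 2 * Real.log 3) / k := by
  have hnormβ : ‖β‖ = ρj := by simp [hβpolar, Complex.norm_exp, hρj.le]
  have hρj_half : 1 / 2 < ρj := by
    have h := one_third_lt_norm_pow_of_fibPoly_isRoot hβ (hnormβ ▸ hρj1)
    rw [hnormβ] at h
    nlinarith [pow_le_pow_of_le_one hρj.le hρj1.le (by omega : 2 ≤ k)]
  have hsin : 4 / k ≤ |sin (θi - θj)| := by
    rw [abs_sin_eq_sin_abs_of_abs_le_pi (by linarith [pi_pos])]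
    exact four_div_le_sin k hge hlt.le
  have hlog : 1 < Real.log 3 := by linarith [log_three_gt_d9]
  calc (4 - 2 * Real.log 3) / k ≤ 1 / 2 * (4 / k) := by
        rw [← mul_div_assoc]; gcongr; linarith
    _ ≤ ρj * |sin (θi - θj)| := by gcongr
    _ = |ρj * sin (θi - θj)| := by rw [abs_mul, abs_of_pos hρj]
    _ ≤ ‖α - β‖ := hαpolar ▸ hβpolar ▸ abs_mul_sin_sub_le_norm_sub ρi ρj θi θj

/-- Let `k ≥ 100` and let `α = ρᵢ·e^(iθᵢ)`, `β = ρⱼ·e^(iθⱼ)` be roots of `f_k` with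
`ρᵢ, ρⱼ < 1` and `θᵢ, θⱼ ∈ (0, π]`. If `π/2 > |θᵢ − θⱼ| ≥ 2π/k`, then
`|α − β| ≥ (4 − 2·log 3)/k`. -/
theorem fibPoly_nonconsecutive_arguments_separation (k : ℕ) (hk : 100 ≤ k)
    (α β : ℂ) (ρi ρj θi θj : ℝ)
    (hα : (fibPoly k).IsRoot α) (hβ : (fibPoly k).IsRoot β)
    (hαpolar : α = (ρi : ℂ) * Complex.exp (θi * Complex.I))
    (hβpolar : β = (ρj : ℂ) * Complex.exp (θj * Complex.I))
    (hρi : 0 < ρi) (hρi1 : ρi < 1) (hρj : 0 < ρj) (hρj1 : ρj < 1)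
    (hθi : 0 < θi) (hθi' : θi ≤ π) (hθj : 0 < θj) (hθj' : θj ≤ π)
    (hlt : |θi - θj| < π / 2) (hge : |θi - θj| ≥ 2 * π / k) :
    ‖α - β‖ ≥ (4 - 2 * Real.log 3) / k :=
  fibPoly_nonconsecutive_arguments_separation_general k hk α β ρi ρj θi θj hβ hαpolar hβpolar hρj
    hρj1 hlt hge
end
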